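/- arXiv:2501.18679 — 8 statements merged into one kernel-verified Lean document; each statement's English description precedes it below -/
import Mathlib

section
/- For any matrix M : Matrix ι κ ℂ over finite index types, the real part of tr((M * Mᴴ)²) is at least ∑_{i : ι} ∑_{j : κ} ‖M i j‖⁴. (This is the α = 2 core of Proposition 4: the Rényi-2 entanglement entropy of a bipartite pure state whose coefficient matrix in an orthonormal product basis is M is at most its Rényi-2 participation entropy in that basis, since tr((M Mᴴ)²) is the purity of the reduced density matrix and the right-hand side is the sum of fourth powers of the coefficients.) -/
open Matrix Kronecker
open scoped Classical

noncomputable section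

/-- Single-qubit Pauli matrices. -/
def pauli : Fin 4 → Matrix (Fin 2) (Fin 2) ℂ :=
  ![1, !![0, 1; 1, 0], !![0, -Complex.I; Complex.I, 0], !![1, 0; 0, -1]]

/-- Pauli string on `N` qubits with label `a`. -/
def PauliString {N : ℕ} (a : Fin N → Fin 4) :
    Matrix (Fin N → Fin 2) (Fin N → Fin 2) ℂ :=
  fun f g => ∏ k, pauli (a k) (f k) (g k)

/-- Reduced Choi state: partial trace over the doubled-B factor of the
normalized Choi state of `O`. -/
def rhoA {ιA ιB : Type*} [Fintype ιA] [Fintype ιB]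
    (O : Matrix (ιA × ιB) (ιA × ιB) ℂ) :
    Matrix (ιA × ιA) (ιA × ιA) ℂ :=
  fun p q =>
    (1 / (Fintype.card ιA * Fintype.card ιB : ℂ)) *
      ∑ b : ιB, ∑ b' : ιB, O (p.1, b) (p.2, b') * star (O (q.1, b) (q.2, b'))

/-- Identification of `N = N_A + N_B` qubits with the pair of subsystems. -/
def qubitEquiv (NA NB : ℕ) :
    (Fin (NA + NB) → Fin 2) ≃ (Fin NA → Fin 2) × (Fin NB → Fin 2) :=
  (Equiv.arrowCongr finSumFinEquiv.symm (Equiv.refl (Fin 2))).trans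
    (Equiv.sumArrowEquivProdArrow _ _ _)

/-- Reduced Choi state of an `N = N_A + N_B` qubit operator, subsystem A
being the first `N_A` qubits. -/
def rhoAq (NA NB : ℕ)
    (O : Matrix (Fin (NA + NB) → Fin 2) (Fin (NA + NB) → Fin 2) ℂ) :
    Matrix ((Fin NA → Fin 2) × (Fin NA → Fin 2))
      ((Fin NA → Fin 2) × (Fin NA → Fin 2)) ℂ :=
  rhoA (Matrix.reindex (qubitEquiv NA NB) (qubitEquiv NA NB) O)

/-- `n`-fold replica (tensor power) of a matrix. -/
def replica {ι : Type*} (n : ℕ) (O : Matrix ι ι ℂ) :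
    Matrix (Fin n → ι) (Fin n → ι) ℂ :=
  fun f g => ∏ a, O (f a) (g a)

/-- Replica permutation operator. -/
def Tperm {ι : Type*} [DecidableEq ι] {n : ℕ} (π : Equiv.Perm (Fin n)) :
    Matrix (Fin n → ι) (Fin n → ι) ℂ :=
  fun f g => if f = g ∘ π then 1 else 0

/-- Number of cycles of a permutation, counting fixed points as 1-cycles. -/
def numCycles {n : ℕ} (π : Equiv.Perm (Fin n)) : ℕ :=
  Multiset.card π.cycleType + (Finset.univ.filter fun x => π x = x).card

/-- `δ(π) = 0` if `π` has no fixed points and all cycles of even length,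
else `δ(π) = 1`. -/
def deltaOdd {n : ℕ} (π : Equiv.Perm (Fin n)) : ℕ :=
  if (∀ x, π x ≠ x) ∧ (∀ c ∈ π.cycleType, Even c) then 0 else 1

/-- Projector onto four-fold replicated Pauli strings. -/
def LambdaPlus (N : ℕ) :
    Matrix (Fin 4 → (Fin N → Fin 2)) (Fin 4 → (Fin N → Fin 2)) ℂ :=
  (1 / (4 ^ N : ℂ)) • ∑ a : Fin N → Fin 4, replica 4 (PauliString a)

def permA : Equiv.Perm (Fin 4) := Equiv.swap 0 1 * Equiv.swap 2 3
def permB : Equiv.Perm (Fin 4) := Equiv.swap 0 3 * Equiv.swap 1 2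

/-- The purity contraction permutation operator `T'` on four replicas of a
bipartite system. -/
def Tprime {ιA ιB : Type*} [DecidableEq ιA] [DecidableEq ιB] :
    Matrix (Fin 4 → ιA × ιB) (Fin 4 → ιA × ιB) ℂ :=
  fun f g =>
    if (∀ a, (f a).1 = (g (permA a)).1 ∧ (f a).2 = (g (permB a)).2) then 1 else 0

/-- The unitary stabilizer group of `U` (as a finite set of pairs of Pauli
labels). -/
def Stab {N : ℕ} (U : Matrix (Fin N → Fin 2) (Fin N → Fin 2) ℂ) :
    Finset ((Fin N → Fin 4) × (Fin N → Fin 4)) :=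
  Finset.univ.filter fun p =>
    Matrix.trace (PauliString p.1 * Uᴴ * PauliString p.2 * U) / (2 ^ N : ℂ)
      ∈ ({1, -1} : Set ℂ)

namespace Matrix

variable {m n 𝕜 : Type*} [Fintype n] [RCLike 𝕜]

theorem mul_conjTranspose_self_apply_self (A : Matrix m n 𝕜) (i : m) :
    (A * Aᴴ) i i = ((∑ j, ‖A i j‖ ^ 2 : ℝ) : 𝕜) := by
  simp [mul_apply, RCLike.mul_conj]

theorem trace_mul_conjTranspose_self [Fintype m] (A : Matrix m n 𝕜) :
    (A * Aᴴ).trace = ((∑ i, ∑ j, ‖A i j‖ ^ 2 : ℝ) : 𝕜) := by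
  simp [trace, mul_conjTranspose_self_apply_self]

theorem sum_norm_pow_four_le_norm_mul_conjTranspose_self_apply_sq (A : Matrix m n 𝕜) (i : m) :
    ∑ j, ‖A i j‖ ^ 4 ≤ ‖(A * Aᴴ) i i‖ ^ 2 := by
  have hdiag : ‖(A * Aᴴ) i i‖ = ∑ j, ‖A i j‖ ^ 2 := by
    rw [mul_conjTranspose_self_apply_self, RCLike.norm_ofReal,
      abs_of_nonneg (by positivity)]
  calc ∑ j, ‖A i j‖ ^ 4 = ∑ j, (‖A i j‖ ^ 2) ^ 2 := by simp only [← pow_mul]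
    _ ≤ (∑ j, ‖A i j‖ ^ 2) ^ 2 := Finset.sum_sq_le_sq_sum_of_nonneg fun j _ => by positivity
    _ = ‖(A * Aᴴ) i i‖ ^ 2 := by rw [hdiag]

end Matrix

/-- the Rényi-2 purity `Re tr((M Mᴴ)²)` dominates the sum of
fourth powers of the coefficients of `M`. -/
theorem purity_ge_sum_pow_four {ι κ : Type*} [Fintype ι] [Fintype κ]
    (M : Matrix ι κ ℂ) :
    ∑ i : ι, ∑ j : κ, ‖M i j‖ ^ 4 ≤ (Matrix.trace ((M * Mᴴ) * (M * Mᴴ))).re := by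
  set A := M * Mᴴ
  have hAA : A * A = A * Aᴴ := by rw [(isHermitian_mul_conjTranspose_self M).eq]
  calc ∑ i, ∑ j, ‖M i j‖ ^ 4 ≤ ∑ i, ‖A i i‖ ^ 2 :=
        Finset.sum_le_sum fun i _ => sum_norm_pow_four_le_norm_mul_conjTranspose_self_apply_sq M i
    _ ≤ ∑ i, ∑ i', ‖A i i'‖ ^ 2 :=
        Finset.sum_le_sum fun i _ =>
          Finset.single_le_sum (f := fun i' => ‖A i i'‖ ^ 2) (fun _ _ => by positivity)
            (Finset.mem_univ i)
    _ = (A * A).trace.re := by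
        rw [hAA, trace_mul_conjTranspose_self]; exact (RCLike.ofReal_re (K := ℂ) _).symm

end
end

section
/- (Proposition 3: operator stabilizer entropy is bounded by unitary nullity.) Let U be a unitary matrix on (Fin N → Fin 2), let a₀ : Fin N → Fin 4, set O_U := Uᴴ * P_{a₀} * U, and let c_a := (tr(O_U * P_a)).re / D for each Pauli label a : Fin N → Fin 4. Then for every real α with 0 < α and α ≠ 1: (1/(1−α)) · Real.logb 2 (∑_a (c_a²)^α) ≤ 2·N − Real.logb 2 (card (Stab U)); that is, the operator stabilizer α-Rényi entropy M^{(α)}(O_U) is at most the unitary nullity ν(U). -/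
/-!
Write `O = Uᴴ P_{a₀} U` and `c_a = tr(O P_a) / 2^N`. Since `O² = 1`, Parseval's identity for
the Pauli basis gives `∑ c_a² = 1`, and by Jensen the Rényi entropy of the distribution `c_a²`
is at most the logarithm of the size of its support. If `(a, b) ∈ Stab U` then
`Uᴴ P_b U = ±P_a`, so conjugating `O` by `P_a` multiplies it by the commutation sign of `P_b`
with `P_{a₀}`; hence on the support of `c` the commutation sign of `P_a` with every first label
of `Stab U` is prescribed. `Stab U` is a group under multiplication of labels whose projection
to the first label is injective, so character orthogonality over `(Fin 4)^N` bounds the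
support by `4^N / #(Stab U)`.
-/

open Matrix Kronecker
open scoped Classical

noncomputable section

open scoped Finset

-- Labels `0, 1, 2, 3` stand for `1, X, Y, Z`; read as two-bit numbers, `σ_i σ_j` is a phase
-- times `σ_(i ^^^ j)`, and the sign of `σ_i σ_j = ± σ_j σ_i` is `pauliCommSign i j`.
def pauliPhase : Fin 4 → Fin 4 → ℂ :=
  ![![1, 1, 1, 1], ![1, 1, -Complex.I, Complex.I], ![1, Complex.I, 1, -Complex.I],
    ![1, -Complex.I, Complex.I, 1]]

def pauliCommSign : Fin 4 → Fin 4 → ℝ :=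
  ![![1, 1, 1, 1], ![1, 1, -1, -1], ![1, -1, 1, -1], ![1, -1, -1, 1]]

lemma pauli_zero : pauli 0 = 1 := rfl

lemma pauli_mul_self (i : Fin 4) : pauli i * pauli i = 1 := by
  ext x y
  fin_cases i <;> fin_cases x <;> fin_cases y <;> simp [pauli, Matrix.mul_apply, Fin.sum_univ_two]

lemma pauli_xor (i j : Fin 4) : pauli (i ^^^ j) = pauliPhase i j • (pauli i * pauli j) := by
  ext x y
  fin_cases i <;> fin_cases j <;> fin_cases x <;> fin_cases y <;>
    simp [pauli, pauliPhase]

lemma pauliPhase_ne_zero (i j : Fin 4) : pauliPhase i j ≠ 0 := by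
  fin_cases i <;> fin_cases j <;> simp [pauliPhase]

lemma pauli_mul_comm_smul (i j : Fin 4) :
    pauli i * pauli j = (pauliCommSign i j : ℂ) • (pauli j * pauli i) := by
  ext x y
  fin_cases i <;> fin_cases j <;> fin_cases x <;> fin_cases y <;>
    simp [pauli, pauliCommSign, Matrix.mul_apply, Fin.sum_univ_two]

lemma pauli_isHermitian (i : Fin 4) : (pauli i).IsHermitian := by
  ext x y
  fin_cases i <;> fin_cases x <;> fin_cases y <;> simp [pauli]

lemma trace_pauli_of_ne_zero {i : Fin 4} (hi : i ≠ 0) : (pauli i).trace = 0 := by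
  fin_cases i <;> simp_all [pauli, Matrix.trace, Fin.sum_univ_two]

lemma sum_pauli_mul_apply (x y x' y' : Fin 2) :
    ∑ i, pauli i x y * pauli i x' y' = if x = y' ∧ x' = y then 2 else 0 := by
  fin_cases x <;> fin_cases y <;> fin_cases x' <;> fin_cases y' <;>
    simp [pauli, Fin.sum_univ_four] <;> norm_num

lemma pauliCommSign_mul_self (i j : Fin 4) : pauliCommSign i j * pauliCommSign i j = 1 := by
  fin_cases i <;> fin_cases j <;> norm_num [pauliCommSign]

lemma pauliCommSign_zero_left (j : Fin 4) : pauliCommSign 0 j = 1 := by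
  fin_cases j <;> rfl

lemma pauliCommSign_zero_right (i : Fin 4) : pauliCommSign i 0 = 1 := by
  fin_cases i <;> rfl

lemma pauliCommSign_xor_left (i j l : Fin 4) :
    pauliCommSign (i ^^^ j) l = pauliCommSign i l * pauliCommSign j l := by
  fin_cases i <;> fin_cases j <;> fin_cases l <;> norm_num [pauliCommSign] <;> rfl

lemma pauliCommSign_xor_right (i j l : Fin 4) :
    pauliCommSign i (j ^^^ l) = pauliCommSign i j * pauliCommSign i l := by
  fin_cases i <;> fin_cases j <;> fin_cases l <;> norm_num [pauliCommSign] <;> rfl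

lemma exists_pauliCommSign_eq_neg_one {i : Fin 4} (hi : i ≠ 0) :
    ∃ j, pauliCommSign i j = -1 := by
  fin_cases i
  · exact absurd rfl hi
  · exact ⟨3, by simp [pauliCommSign]⟩
  · exact ⟨3, by simp [pauliCommSign]⟩
  · exact ⟨1, by simp [pauliCommSign]⟩

instance {ι α : Type*} [XorOp α] : XorOp (ι → α) := ⟨fun a b k => a k ^^^ b k⟩

@[simp] lemma Pi.xor_apply {ι α : Type*} [XorOp α] (a b : ι → α) (k : ι) :
    (a ^^^ b) k = a k ^^^ b k := rfl

section Labels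

variable {N : ℕ}

def commSign (a b : Fin N → Fin 4) : ℝ := ∏ k, pauliCommSign (a k) (b k)

lemma commSign_mul_self (a b : Fin N → Fin 4) : commSign a b * commSign a b = 1 := by
  rw [commSign, ← Finset.prod_mul_distrib]
  exact Finset.prod_eq_one fun _ _ => pauliCommSign_mul_self _ _

lemma commSign_zero_left (b : Fin N → Fin 4) : commSign 0 b = 1 :=
  Finset.prod_eq_one fun _ _ => pauliCommSign_zero_left _

lemma commSign_xor_left (a b c : Fin N → Fin 4) :
    commSign (a ^^^ b) c = commSign a c * commSign b c := by
  simp only [commSign, Pi.xor_apply, pauliCommSign_xor_left, Finset.prod_mul_distrib]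

lemma commSign_xor_right (a b c : Fin N → Fin 4) :
    commSign a (b ^^^ c) = commSign a b * commSign a c := by
  simp only [commSign, Pi.xor_apply, pauliCommSign_xor_right, Finset.prod_mul_distrib]

lemma xor_involutive (a : Fin N → Fin 4) : Function.Involutive (a ^^^ ·) := by
  have h : ∀ i j : Fin 4, i ^^^ (i ^^^ j) = j := by decide
  exact fun b => funext fun k => h (a k) (b k)

/-- Translating by a label that anticommutes with `h` flips the sign of every term. -/
lemma sum_commSign_eq_zero {h : Fin N → Fin 4} (hh : h ≠ 0) : ∑ a, commSign h a = 0 := by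
  obtain ⟨k, hk⟩ := Function.ne_iff.mp hh
  obtain ⟨j, hj⟩ := exists_pauliCommSign_eq_neg_one hk
  let t : Fin N → Fin 4 := Pi.single k j
  have ht : commSign h t = -1 := by
    rw [commSign, Finset.prod_eq_single k
      (fun l _ hl => by simp [t, hl, pauliCommSign_zero_right]) (by simp)]
    simpa [t] using hj
  have hsum := Fintype.sum_bijective _ (xor_involutive t).bijective
    (fun a => commSign h (t ^^^ a)) (commSign h) fun _ => rfl
  simp only [commSign_xor_right, ht, ← Finset.mul_sum] at hsum
  linarith

end Labels

namespace PauliString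

variable {N : ℕ}

lemma mul_apply (a b : Fin N → Fin 4) (f g : Fin N → Fin 2) :
    (PauliString a * PauliString b) f g = ∏ k, (pauli (a k) * pauli (b k)) (f k) (g k) := by
  simp only [Matrix.mul_apply, PauliString, ← Finset.prod_mul_distrib]
  exact (Fintype.prod_sum fun k z => pauli (a k) (f k) z * pauli (b k) z (g k)).symm

lemma zero : PauliString (0 : Fin N → Fin 4) = 1 := by
  ext f g
  simp only [PauliString, Pi.zero_apply, pauli_zero, Matrix.one_apply, Finset.prod_boole,
    Finset.mem_univ, forall_const, funext_iff]

lemma mul_self (a : Fin N → Fin 4) : PauliString a * PauliString a = 1 := by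
  ext f g
  rw [mul_apply, ← zero]
  simp only [pauli_mul_self]
  rfl

lemma xor_eq_smul_mul (a b : Fin N → Fin 4) :
    PauliString (a ^^^ b) = (∏ k, pauliPhase (a k) (b k)) • (PauliString a * PauliString b) := by
  ext f g
  simp only [Matrix.smul_apply, mul_apply, PauliString, Pi.xor_apply, pauli_xor, smul_eq_mul,
    Finset.prod_mul_distrib]

lemma mul_comm_smul (a b : Fin N → Fin 4) :
    PauliString a * PauliString b = (commSign a b : ℂ) • (PauliString b * PauliString a) := by
  ext f g
  simp only [Matrix.smul_apply, mul_apply, smul_eq_mul, commSign, Complex.ofReal_prod]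
  rw [← Finset.prod_mul_distrib]
  exact Finset.prod_congr rfl fun k _ => by rw [pauli_mul_comm_smul]; rfl

lemma isHermitian (a : Fin N → Fin 4) : (PauliString a).IsHermitian := by
  ext f g
  simp only [Matrix.conjTranspose_apply, PauliString, star_prod]
  exact Finset.prod_congr rfl fun k _ => by
    rw [← Matrix.conjTranspose_apply, (pauli_isHermitian _).eq]

lemma trace_eq_zero {a : Fin N → Fin 4} (ha : a ≠ 0) : (PauliString a).trace = 0 := by
  obtain ⟨k, hk⟩ := Function.ne_iff.mp ha
  have htrace : (PauliString a).trace = ∏ k, (pauli (a k)).trace := by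
    simp only [Matrix.trace, Matrix.diag, PauliString]
    exact (Fintype.prod_sum fun k x => pauli (a k) x x).symm
  rw [htrace]
  exact Finset.prod_eq_zero (Finset.mem_univ k) (trace_pauli_of_ne_zero hk)

lemma sum_apply_mul_apply (f g f' g' : Fin N → Fin 2) :
    ∑ a : Fin N → Fin 4, PauliString a f g * PauliString a f' g' =
      if f = g' ∧ f' = g then 2 ^ N else 0 := by
  simp only [PauliString, ← Finset.prod_mul_distrib]
  rw [← Fintype.prod_sum fun k i => pauli i (f k) (g k) * pauli i (f' k) (g' k)]
  simp only [sum_pauli_mul_apply, Finset.prod_ite_zero, Finset.prod_const, Finset.card_univ,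
    Fintype.card_fin, Finset.mem_univ, true_implies, forall_and, funext_iff]

lemma mul_eq_smul_xor (a b : Fin N → Fin 4) :
    PauliString a * PauliString b = (∏ k, pauliPhase (a k) (b k))⁻¹ • PauliString (a ^^^ b) := by
  rw [xor_eq_smul_mul, smul_smul, inv_mul_cancel₀ (Finset.prod_ne_zero_iff.mpr fun k _ =>
    pauliPhase_ne_zero _ _), one_smul]

lemma mul_mul_eq_commSign_smul (b a : Fin N → Fin 4) :
    PauliString b * PauliString a * PauliString b = (commSign b a : ℂ) • PauliString a := by
  rw [mul_comm_smul b a, Matrix.smul_mul, Matrix.mul_assoc, mul_self, Matrix.mul_one]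

lemma mem_unitaryGroup (a : Fin N → Fin 4) :
    PauliString a ∈ unitaryGroup (Fin N → Fin 2) ℂ := by
  rw [mem_unitaryGroup_iff, star_eq_conjTranspose, (isHermitian a).eq, mul_self]

end PauliString

lemma sum_trace_mul_PauliString_mul_trace_mul_PauliString {N : ℕ}
    (M M' : Matrix (Fin N → Fin 2) (Fin N → Fin 2) ℂ) :
    ∑ a : Fin N → Fin 4, (M * PauliString a).trace * (M' * PauliString a).trace =
      2 ^ N * (M * M').trace := by
  have htrace : ∀ (A B : Matrix (Fin N → Fin 2) (Fin N → Fin 2) ℂ),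
      (A * B).trace = ∑ p : (Fin N → Fin 2) × (Fin N → Fin 2), A p.1 p.2 * B p.2 p.1 := by
    intro A B
    rw [Fintype.sum_prod_type]
    rfl
  calc ∑ a : Fin N → Fin 4, (M * PauliString a).trace * (M' * PauliString a).trace
      = ∑ p : (Fin N → Fin 2) × (Fin N → Fin 2), ∑ q : (Fin N → Fin 2) × (Fin N → Fin 2),
          M p.1 p.2 * M' q.1 q.2 *
            ∑ a : Fin N → Fin 4, PauliString a p.2 p.1 * PauliString a q.2 q.1 := by
        simp only [htrace, Finset.sum_mul_sum]
        simp only [Finset.mul_sum]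
        rw [Finset.sum_comm]
        refine Finset.sum_congr rfl fun p _ => ?_
        rw [Finset.sum_comm]
        exact Finset.sum_congr rfl fun q _ => Finset.sum_congr rfl fun a _ => by ring
    _ = ∑ p : (Fin N → Fin 2) × (Fin N → Fin 2), M p.1 p.2 * M' p.2 p.1 * 2 ^ N := by
        refine Finset.sum_congr rfl fun p _ => ?_
        simp only [PauliString.sum_apply_mul_apply]
        rw [Finset.sum_eq_single (p.2, p.1) (fun q _ hq => ?_) (by simp)]
        · simp
        · rw [if_neg fun h => hq (Prod.ext h.1.symm h.2), mul_zero]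
    _ = 2 ^ N * (M * M').trace := by
        rw [htrace, Finset.mul_sum]
        exact Finset.sum_congr rfl fun p _ => by ring

open scoped ComplexOrder in
lemma Matrix.eq_one_of_mem_unitaryGroup_of_trace_eq_card {n : Type*} [Fintype n]
    [DecidableEq n] {A : Matrix n n ℂ} (hA : A ∈ unitaryGroup n ℂ)
    (htr : A.trace = Fintype.card n) : A = 1 := by
  have hAA : Aᴴ * A = 1 := hA.1
  have hsq : (A - 1)ᴴ * (A - 1) = 1 - Aᴴ - A + 1 := by
    simp only [conjTranspose_sub, conjTranspose_one, sub_mul, mul_sub, hAA, mul_one, one_mul]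
    abel
  rw [← sub_eq_zero, ← trace_conjTranspose_mul_self_eq_zero_iff, hsq]
  simp only [trace_add, trace_sub, trace_one, trace_conjTranspose, htr, star_natCast]
  ring

lemma Matrix.eq_one_or_eq_neg_one_of_mem_unitaryGroup {n : Type*} [Fintype n]
    [DecidableEq n] {A : Matrix n n ℂ} (hA : A ∈ unitaryGroup n ℂ)
    (htr : A.trace = Fintype.card n ∨ A.trace = -Fintype.card n) : A = 1 ∨ A = -1 := by
  refine htr.imp (eq_one_of_mem_unitaryGroup_of_trace_eq_card hA) fun h => ?_
  have hneg : -A ∈ unitaryGroup n ℂ := by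
    simpa [mem_unitaryGroup_iff] using (mem_unitaryGroup_iff.mp hA)
  exact neg_eq_iff_eq_neg.mp (eq_one_of_mem_unitaryGroup_of_trace_eq_card hneg
    (by rw [trace_neg, h, neg_neg]))

section Stab

variable {N : ℕ} {U : Matrix (Fin N → Fin 2) (Fin N → Fin 2) ℂ}

lemma conj_mul_conj (hU : U ∈ unitaryGroup (Fin N → Fin 2) ℂ)
    (A B : Matrix (Fin N → Fin 2) (Fin N → Fin 2) ℂ) :
    (Uᴴ * A * U) * (Uᴴ * B * U) = Uᴴ * (A * B) * U := by
  have hUU : U * Uᴴ = 1 := hU.2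
  simp only [Matrix.mul_assoc]
  rw [← Matrix.mul_assoc U, hUU, Matrix.one_mul]

lemma conj_PauliString_mul_self (hU : U ∈ unitaryGroup (Fin N → Fin 2) ℂ)
    (a : Fin N → Fin 4) : (Uᴴ * PauliString a * U) * (Uᴴ * PauliString a * U) = 1 := by
  rw [conj_mul_conj hU, PauliString.mul_self, Matrix.mul_one]
  exact hU.1

lemma mem_Stab_iff (hU : U ∈ unitaryGroup (Fin N → Fin 2) ℂ) {a b : Fin N → Fin 4} :
    (a, b) ∈ Stab U ↔
      Uᴴ * PauliString b * U = PauliString a ∨ Uᴴ * PauliString b * U = -PauliString a := by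
  have hcard : (Fintype.card (Fin N → Fin 2) : ℂ) = 2 ^ N := by simp
  have h2N : (2 : ℂ) ^ N ≠ 0 := pow_ne_zero _ two_ne_zero
  have hassoc : PauliString a * Uᴴ * PauliString b * U =
      PauliString a * (Uᴴ * PauliString b * U) := by simp only [Matrix.mul_assoc]
  have hcancel : PauliString a * (PauliString a * (Uᴴ * PauliString b * U)) =
      Uᴴ * PauliString b * U := by rw [← Matrix.mul_assoc, PauliString.mul_self, Matrix.one_mul]
  simp only [Stab, Finset.mem_filter, Finset.mem_univ, true_and, Set.mem_insert_iff,
    Set.mem_singleton_iff, div_eq_iff h2N, one_mul, neg_one_mul, hassoc]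
  constructor
  · intro htr
    have hA : PauliString a * (Uᴴ * PauliString b * U) ∈ unitaryGroup (Fin N → Fin 2) ℂ :=
      mul_mem (PauliString.mem_unitaryGroup a)
        (mul_mem (mul_mem (Unitary.star_mem hU) (PauliString.mem_unitaryGroup b)) hU)
    rcases eq_one_or_eq_neg_one_of_mem_unitaryGroup hA (by rwa [hcard]) with h | h <;>
      rw [← hcancel, h] <;> simp
  · rintro (h | h) <;> simp [h, PauliString.mul_self]

lemma mem_Stab_of_eq_smul (hU : U ∈ unitaryGroup (Fin N → Fin 2) ℂ) {a b : Fin N → Fin 4}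
    {c : ℂ} (h : Uᴴ * PauliString b * U = c • PauliString a) : (a, b) ∈ Stab U := by
  have hsq := conj_PauliString_mul_self hU b
  rw [h, smul_mul_smul_comm, PauliString.mul_self] at hsq
  have hc : c * c = 1 := by simpa using congrFun (congrFun hsq default) default
  rw [mem_Stab_iff hU, h]
  rcases mul_self_eq_one_iff.mp hc with rfl | rfl <;> simp

lemma zero_mem_Stab (hU : U ∈ unitaryGroup (Fin N → Fin 2) ℂ) : (0, 0) ∈ Stab U :=
  mem_Stab_of_eq_smul hU (c := 1) (by rw [PauliString.zero, Matrix.mul_one, one_smul]; exact hU.1)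

lemma eq_zero_of_zero_mem_Stab (hU : U ∈ unitaryGroup (Fin N → Fin 2) ℂ) {b : Fin N → Fin 4}
    (hb : (0, b) ∈ Stab U) : b = 0 := by
  have hUU : U * Uᴴ = 1 := hU.2
  have hback : PauliString b = U * (Uᴴ * PauliString b * U) * Uᴴ := by
    simp only [← Matrix.mul_assoc, hUU, Matrix.one_mul]
    rw [Matrix.mul_assoc, hUU, Matrix.mul_one]
  by_contra hne
  have htr := PauliString.trace_eq_zero hne
  rcases (mem_Stab_iff hU).mp hb with h | h <;>
    rw [hback, h, PauliString.zero] at htr <;>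
    simp [hUU] at htr

lemma xor_mem_Stab (hU : U ∈ unitaryGroup (Fin N → Fin 2) ℂ)
    {s t : (Fin N → Fin 4) × (Fin N → Fin 4)} (hs : s ∈ Stab U) (ht : t ∈ Stab U) :
    (s.1 ^^^ t.1, s.2 ^^^ t.2) ∈ Stab U := by
  have hsign : ∀ p ∈ Stab U, ∃ ε : ℂ, Uᴴ * PauliString p.2 * U = ε • PauliString p.1 := by
    rintro ⟨a, b⟩ hp
    rcases (mem_Stab_iff hU).mp hp with h | h
    · exact ⟨1, by rw [h, one_smul]⟩
    · exact ⟨-1, by rw [h, neg_one_smul]⟩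
  obtain ⟨ε, hε⟩ := hsign s hs
  obtain ⟨ε', hε'⟩ := hsign t ht
  refine mem_Stab_of_eq_smul hU (c := (∏ k, pauliPhase (s.2 k) (t.2 k)) * (ε * ε') *
    (∏ k, pauliPhase (s.1 k) (t.1 k))⁻¹) ?_
  rw [PauliString.xor_eq_smul_mul, Matrix.mul_smul, Matrix.smul_mul, ← conj_mul_conj hU, hε, hε',
    smul_mul_smul_comm, PauliString.mul_eq_smul_xor, smul_smul, smul_smul, mul_assoc]

end Stab

lemma Matrix.IsHermitian.star_trace_mul {n : Type*} [Fintype n] {A B : Matrix n n ℂ}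
    (hA : A.IsHermitian) (hB : B.IsHermitian) : star (A * B).trace = (A * B).trace := by
  rw [← trace_conjTranspose, conjTranspose_mul, hA.eq, hB.eq, trace_mul_comm]

section HeisenbergPauli

variable {N : ℕ} {U : Matrix (Fin N → Fin 2) (Fin N → Fin 2) ℂ}

lemma sum_sq_re_trace_conj_mul_PauliString (hU : U ∈ unitaryGroup (Fin N → Fin 2) ℂ)
    (a₀ : Fin N → Fin 4) :
    ∑ a : Fin N → Fin 4,
      (((Uᴴ * PauliString a₀ * U) * PauliString a).trace.re / (2 ^ N : ℝ)) ^ 2 = 1 := by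
  have hreal : ∀ a : Fin N → Fin 4,
      (((Uᴴ * PauliString a₀ * U) * PauliString a).trace.re : ℂ) =
        ((Uᴴ * PauliString a₀ * U) * PauliString a).trace := fun a =>
    Complex.conj_eq_iff_re.mp <| IsHermitian.star_trace_mul
      (isHermitian_conjTranspose_mul_mul U (PauliString.isHermitian a₀))
      (PauliString.isHermitian a)
  have hparseval := sum_trace_mul_PauliString_mul_trace_mul_PauliString
    (Uᴴ * PauliString a₀ * U) (Uᴴ * PauliString a₀ * U)
  rw [conj_PauliString_mul_self hU, trace_one, Fintype.card_fun, Fintype.card_fin,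
    Fintype.card_fin] at hparseval
  have hsum : ∑ a : Fin N → Fin 4,
      (((Uᴴ * PauliString a₀ * U) * PauliString a).trace.re) ^ 2 = 2 ^ N * 2 ^ N := by
    apply Complex.ofReal_injective
    push_cast
    simp only [sq, hreal, hparseval]
    push_cast
    ring
  simp only [div_pow, ← Finset.sum_div, hsum]
  field_simp

lemma commSign_eq_of_mem_Stab (hU : U ∈ unitaryGroup (Fin N → Fin 2) ℂ)
    {a₀ a : Fin N → Fin 4} {s : (Fin N → Fin 4) × (Fin N → Fin 4)} (hs : s ∈ Stab U)
    (hne : ((Uᴴ * PauliString a₀ * U) * PauliString a).trace ≠ 0) :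
    commSign s.1 a = commSign s.2 a₀ := by
  set O := Uᴴ * PauliString a₀ * U
  have hconj : PauliString s.1 * O * PauliString s.1 = (commSign s.2 a₀ : ℂ) • O := by
    have h : (Uᴴ * PauliString s.2 * U) * O * (Uᴴ * PauliString s.2 * U) =
        (commSign s.2 a₀ : ℂ) • O := by
      rw [conj_mul_conj hU, conj_mul_conj hU, PauliString.mul_mul_eq_commSign_smul, Matrix.mul_smul,
        Matrix.smul_mul]
    rcases (mem_Stab_iff hU).mp hs with hs' | hs' <;> rw [hs'] at h <;> simpa using h
  clear_value O
  have htrace : (PauliString s.1 * O * PauliString s.1 * PauliString a).trace =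
      commSign s.1 a * (O * PauliString a).trace := by
    rw [Matrix.mul_assoc, Matrix.mul_assoc, trace_mul_comm]
    simp only [Matrix.mul_assoc]
    rw [← Matrix.mul_assoc (PauliString s.1), PauliString.mul_mul_eq_commSign_smul, Matrix.mul_smul,
      trace_smul, smul_eq_mul]
  rw [hconj, Matrix.smul_mul, trace_smul, smul_eq_mul] at htrace
  exact_mod_cast (mul_right_cancel₀ hne htrace).symm

/-- The summand is a character of the group `Stab U`, so the sum is `#(Stab U)` or `0`. -/
lemma sum_Stab_commSign_nonneg (hU : U ∈ unitaryGroup (Fin N → Fin 2) ℂ)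
    (a₀ a : Fin N → Fin 4) : 0 ≤ ∑ s ∈ Stab U, commSign s.1 a * commSign s.2 a₀ := by
  by_cases hall : ∀ s ∈ Stab U, commSign s.1 a * commSign s.2 a₀ = 1
  · rw [Finset.sum_congr rfl hall]
    positivity
  push Not at hall
  obtain ⟨s₀, hs₀, hne⟩ := hall
  have hsign : commSign s₀.1 a * commSign s₀.2 a₀ = -1 := by
    rcases mul_self_eq_one_iff.mp (commSign_mul_self s₀.1 a) with h | h <;>
      rcases mul_self_eq_one_iff.mp (commSign_mul_self s₀.2 a₀) with h' | h' <;>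
      simp_all
  let τ : (Fin N → Fin 4) × (Fin N → Fin 4) → (Fin N → Fin 4) × (Fin N → Fin 4) :=
    fun s => (s₀.1 ^^^ s.1, s₀.2 ^^^ s.2)
  have hτ : ∀ s, τ (τ s) = s := fun s => Prod.ext (xor_involutive _ _) (xor_involutive _ _)
  have hflip : ∑ s ∈ Stab U, commSign s.1 a * commSign s.2 a₀ =
      -∑ s ∈ Stab U, commSign s.1 a * commSign s.2 a₀ := by
    rw [← Finset.sum_neg_distrib]
    refine Finset.sum_nbij' τ τ (fun s hs => xor_mem_Stab hU hs₀ hs)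
      (fun s hs => xor_mem_Stab hU hs₀ hs) (fun s _ => hτ s) (fun s _ => hτ s) fun s _ => ?_
    simp only [τ, commSign_xor_left]
    linear_combination (commSign s.1 a * commSign s.2 a₀) * hsign
  linarith

lemma card_support_mul_card_Stab_le (hU : U ∈ unitaryGroup (Fin N → Fin 2) ℂ)
    (a₀ : Fin N → Fin 4) :
    (#{a | ((Uᴴ * PauliString a₀ * U) * PauliString a).trace ≠ 0} : ℝ) * #(Stab U) ≤ 4 ^ N := by
  have htotal : ∑ a, ∑ s ∈ Stab U, commSign s.1 a * commSign s.2 a₀ = 4 ^ N := by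
    rw [Finset.sum_comm, Finset.sum_eq_single (0, 0)]
    · simp [commSign_zero_left]
    · rintro ⟨h, b⟩ hs hne
      have hh : h ≠ 0 := by
        rintro rfl
        exact hne (by rw [eq_zero_of_zero_mem_Stab hU hs])
      simp only [← Finset.sum_mul, sum_commSign_eq_zero hh, zero_mul]
    · exact fun h => absurd (zero_mem_Stab hU) h
  have hsupp : ∀ a ∈ ({a | ((Uᴴ * PauliString a₀ * U) * PauliString a).trace ≠ 0} :
      Finset (Fin N → Fin 4)), ∑ s ∈ Stab U, commSign s.1 a * commSign s.2 a₀ = #(Stab U) := by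
    intro a ha
    rw [Finset.mem_filter] at ha
    rw [Finset.card_eq_sum_ones, Nat.cast_sum, Nat.cast_one]
    refine Finset.sum_congr rfl fun s hs => ?_
    rw [← commSign_eq_of_mem_Stab hU hs ha.2, commSign_mul_self]
  rw [← htotal, ← nsmul_eq_mul, ← Finset.sum_const, ← Finset.sum_congr rfl hsupp]
  exact Finset.sum_le_sum_of_subset_of_nonneg (Finset.subset_univ _)
    fun a _ _ => sum_Stab_commSign_nonneg hU a₀ a

end HeisenbergPauli

section Renyi

variable {ι : Type*} {S : Finset ι} {p : ι → ℝ} {α : ℝ}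

lemma cast_card_pos_of_sum_eq_one (hsum : ∑ i ∈ S, p i = 1) : (0 : ℝ) < #S := by
  exact_mod_cast (Finset.nonempty_of_sum_ne_zero (hsum ▸ one_ne_zero)).card_pos

lemma sum_rpow_le_card_rpow (hp : ∀ i ∈ S, 0 ≤ p i) (hsum : ∑ i ∈ S, p i = 1)
    (hα₀ : 0 ≤ α) (hα₁ : α ≤ 1) : ∑ i ∈ S, p i ^ α ≤ (#S : ℝ) ^ (1 - α) := by
  have hS := cast_card_pos_of_sum_eq_one hsum
  have hw : ∑ _i ∈ S, (#S : ℝ)⁻¹ = 1 := by simp [hS.ne']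
  have hjensen := (Real.concaveOn_rpow hα₀ hα₁).le_map_sum (fun _ _ => by positivity) hw hp
  simp only [smul_eq_mul, ← Finset.mul_sum, hsum, mul_one] at hjensen
  calc ∑ i ∈ S, p i ^ α = #S * ((#S : ℝ)⁻¹ * ∑ i ∈ S, p i ^ α) := by field_simp
    _ ≤ #S * (#S : ℝ)⁻¹ ^ α := by gcongr
    _ = (#S : ℝ) ^ (1 - α) := by
        rw [Real.inv_rpow hS.le, Real.rpow_sub hS, Real.rpow_one, div_eq_mul_inv]

lemma card_rpow_le_sum_rpow (hp : ∀ i ∈ S, 0 ≤ p i) (hsum : ∑ i ∈ S, p i = 1)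
    (hα : 1 ≤ α) : (#S : ℝ) ^ (1 - α) ≤ ∑ i ∈ S, p i ^ α := by
  have hS := cast_card_pos_of_sum_eq_one hsum
  have hw : ∑ _i ∈ S, (#S : ℝ)⁻¹ = 1 := by simp [hS.ne']
  have hjensen := (convexOn_rpow hα).map_sum_le (fun _ _ => by positivity) hw hp
  simp only [smul_eq_mul, ← Finset.mul_sum, hsum, mul_one] at hjensen
  calc (#S : ℝ) ^ (1 - α) = #S * (#S : ℝ)⁻¹ ^ α := by
        rw [Real.inv_rpow hS.le, Real.rpow_sub hS, Real.rpow_one, div_eq_mul_inv]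
    _ ≤ #S * ((#S : ℝ)⁻¹ * ∑ i ∈ S, p i ^ α) := by gcongr
    _ = ∑ i ∈ S, p i ^ α := by field_simp

lemma renyiEntropy_le_logb_card_support [Fintype ι] (hp : ∀ i, 0 ≤ p i) (hsum : ∑ i, p i = 1)
    (hα₀ : 0 < α) (hα₁ : α ≠ 1) :
    1 / (1 - α) * Real.logb 2 (∑ i, p i ^ α) ≤ Real.logb 2 #{i | p i ≠ 0} := by
  have hsum' : ∑ i ∈ {i | p i ≠ 0}, p i = 1 := by rw [Finset.sum_filter_ne_zero, hsum]
  have hS := cast_card_pos_of_sum_eq_one hsum'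
  have hrestrict : ∑ i, p i ^ α = ∑ i ∈ {i | p i ≠ 0}, p i ^ α := by
    refine (Finset.sum_subset (Finset.subset_univ _) fun i _ hi => ?_).symm
    rw [Finset.mem_filter, not_and, not_not] at hi
    rw [hi (Finset.mem_univ i), Real.zero_rpow hα₀.ne']
  have hp' : ∀ i ∈ ({i | p i ≠ 0} : Finset ι), 0 ≤ p i := fun i _ => hp i
  rw [hrestrict]
  rcases hα₁.lt_or_gt with hlt | hgt
  · have hbound := sum_rpow_le_card_rpow hp' hsum' hα₀.le hlt.le
    have hpos : 0 < ∑ i ∈ {i | p i ≠ 0}, p i ^ α :=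
      Finset.sum_pos (fun i hi => Real.rpow_pos_of_pos
          ((hp i).lt_of_ne (Finset.mem_filter.mp hi).2.symm) α)
        (Finset.nonempty_of_sum_ne_zero (hsum' ▸ one_ne_zero))
    rw [one_div_mul_eq_div, div_le_iff₀ (by linarith), mul_comm,
      ← Real.logb_rpow_eq_mul_logb_of_pos hS]
    exact Real.logb_le_logb_of_le one_lt_two hpos hbound
  · have hbound := card_rpow_le_sum_rpow hp' hsum' hgt.le
    rw [one_div_mul_eq_div, div_le_iff_of_neg (by linarith), mul_comm,
      ← Real.logb_rpow_eq_mul_logb_of_pos hS]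
    exact Real.logb_le_logb_of_le one_lt_two (by positivity) hbound

end Renyi

lemma logb_le_two_mul_sub_logb_of_mul_le_four_pow {x y : ℝ} {N : ℕ} (hx : 0 < x) (hy : 0 < y)
    (h : x * y ≤ 4 ^ N) : Real.logb 2 x ≤ 2 * N - Real.logb 2 y := by
  rw [le_sub_iff_add_le, ← Real.logb_mul hx.ne' hy.ne']
  calc Real.logb 2 (x * y) ≤ Real.logb 2 (4 ^ N) :=
        Real.logb_le_logb_of_le one_lt_two (by positivity) h
    _ = 2 * N := by
        rw [Real.logb_pow, show (4 : ℝ) = 2 ^ 2 by norm_num, Real.logb_pow,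
          Real.logb_self_eq_one one_lt_two]
        push_cast
        ring

/-- Proposition 3: the operator stabilizer `α`-Rényi entropy of
a Heisenberg-evolved Pauli string is bounded by the unitary nullity. -/
theorem ose_le_nullity (N : ℕ)
    (U : Matrix (Fin N → Fin 2) (Fin N → Fin 2) ℂ)
    (hU : U ∈ Matrix.unitaryGroup (Fin N → Fin 2) ℂ)
    (a₀ : Fin N → Fin 4) :
    ∀ α : ℝ, 0 < α → α ≠ 1 →
      (1 / (1 - α)) * Real.logb 2 (∑ a : Fin N → Fin 4,
          (((Matrix.trace ((Uᴴ * PauliString a₀ * U) * PauliString a)).re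
              / (2 ^ N : ℝ)) ^ 2) ^ α) ≤
        2 * (N : ℝ) - Real.logb 2 ((Stab U).card) := by
  intro α hα₀ hα₁
  set c : (Fin N → Fin 4) → ℝ := fun a =>
    (((Uᴴ * PauliString a₀ * U) * PauliString a).trace.re / (2 ^ N : ℝ)) ^ 2
  have hc : ∑ a, c a = 1 := sum_sq_re_trace_conj_mul_PauliString hU a₀
  have hsupp : #{a | c a ≠ 0} ≤ #{a | ((Uᴴ * PauliString a₀ * U) * PauliString a).trace ≠ 0} :=
    Finset.card_le_card fun a ha => by
      simp only [Finset.mem_filter, Finset.mem_univ, true_and] at ha ⊢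
      exact fun htr => ha (by simp [c, htr])
  have hsupp_pos := cast_card_pos_of_sum_eq_one (show ∑ a ∈ {a | c a ≠ 0}, c a = 1 by
    rw [Finset.sum_filter_ne_zero, hc])
  have hStab_pos : (0 : ℝ) < #(Stab U) := by
    exact_mod_cast Finset.card_pos.mpr ⟨_, zero_mem_Stab hU⟩
  calc 1 / (1 - α) * Real.logb 2 (∑ a, c a ^ α)
      ≤ Real.logb 2 #{a | c a ≠ 0} :=
        renyiEntropy_le_logb_card_support (fun a => sq_nonneg _) hc hα₀ hα₁
    _ ≤ 2 * N - Real.logb 2 #(Stab U) :=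
        logb_le_two_mul_sub_logb_of_mul_le_four_pow hsupp_pos hStab_pos <|
          (mul_le_mul_of_nonneg_right (by exact_mod_cast hsupp) hStab_pos.le).trans
            (card_support_mul_card_Stab_le hU a₀)

end
end

section
/- Clifford dynamics preserve zero local-operator entanglement of Pauli operators: if C is a Clifford unitary on (Fin N → Fin 2) and a₀ : Fin N → Fin 4 any Pauli label, then for every bipartition N = N_A + N_B, Re tr(ρ_A(Cᴴ * P_{a₀} * C)²) = 1. -/
open Matrix Kronecker
open scoped Classical

noncomputable section

/-!
A Clifford conjugate of a Pauli string is again a Pauli string up to a phase in `{±1, ±i}`, and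
the reduced Choi state does not see unimodular phases. Across the cut a Pauli string is a product
operator `P_A ⊗ P_B`, and the reduced Choi state of any `A ⊗ B` is the rank-one matrix
`tr(B Bᴴ)/d • vec A (vec A)ᴴ`, whose purity is `(tr(A Aᴴ) tr(B Bᴴ)/d)²`. Pauli strings are
unitary, so both traces are the dimensions and the purity is `1`.
-/

section ReducedChoiState

variable {ιA ιB : Type*} [Fintype ιA] [Fintype ιB]

lemma rhoA_smul {c : ℂ} (hc : c * star c = 1) (O : Matrix (ιA × ιB) (ιA × ιB) ℂ) :
    rhoA (c • O) = rhoA O := by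
  ext p q
  simp only [rhoA, Matrix.smul_apply, smul_eq_mul, star_mul']
  congr 1
  refine Finset.sum_congr rfl fun b _ => Finset.sum_congr rfl fun b' _ => ?_
  linear_combination O (p.1, b) (p.2, b') * star (O (q.1, b) (q.2, b')) * hc

lemma trace_mul_conjTranspose_eq_sum {ι : Type*} [Fintype ι] (A : Matrix ι ι ℂ) :
    (A * Aᴴ).trace = ∑ i, ∑ j, A i j * star (A i j) := by
  simp [trace, mul_apply]

lemma rhoA_kronecker (A : Matrix ιA ιA ℂ) (B : Matrix ιB ιB ℂ) :
    rhoA (A ⊗ₖ B) = ((B * Bᴴ).trace / (Fintype.card ιA * Fintype.card ιB)) •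
      vecMulVec (fun p : ιA × ιA => A p.1 p.2) (fun q => star (A q.1 q.2)) := by
  ext p q
  simp only [rhoA, kronecker_apply, star_mul', trace_mul_conjTranspose_eq_sum, Matrix.smul_apply,
    vecMulVec_apply, smul_eq_mul, Finset.mul_sum, Finset.sum_div, Finset.sum_mul]
  refine Finset.sum_congr rfl fun b _ => Finset.sum_congr rfl fun b' _ => ?_
  ring

lemma trace_rhoA_kronecker_mul_self (A : Matrix ιA ιA ℂ) (B : Matrix ιB ιB ℂ) :
    (rhoA (A ⊗ₖ B) * rhoA (A ⊗ₖ B)).trace =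
      ((A * Aᴴ).trace * (B * Bᴴ).trace / (Fintype.card ιA * Fintype.card ιB)) ^ 2 := by
  have hA : (fun q : ιA × ιA => star (A q.1 q.2)) ⬝ᵥ (fun p => A p.1 p.2) = (A * Aᴴ).trace := by
    simp only [trace_mul_conjTranspose_eq_sum, dotProduct, Fintype.sum_prod_type, mul_comm]
  rw [rhoA_kronecker, smul_mul_smul, vecMulVec_mul_vecMulVec, trace_smul, trace_vecMulVec,
    dotProduct_smul, hA, dotProduct_comm, hA, smul_eq_mul, smul_eq_mul]
  ring

end ReducedChoiState

lemma pauli_mul_conjTranspose (s : Fin 4) : pauli s * (pauli s)ᴴ = 1 := by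
  fin_cases s <;> ext i j <;> fin_cases i <;> fin_cases j <;>
    simp [pauli, mul_apply, Fin.sum_univ_two]

lemma of_prod_mul_of_prod {ι n : Type*} [Fintype ι] [DecidableEq ι] [Fintype n]
    (M M' : ι → Matrix n n ℂ) :
    (of fun f g : ι → n => ∏ k, M k (f k) (g k)) * (of fun f g : ι → n => ∏ k, M' k (f k) (g k)) =
      of fun f g => ∏ k, (M k * M' k) (f k) (g k) := by
  ext f g
  simp only [mul_apply, of_apply, ← Finset.prod_mul_distrib]
  rw [← Fintype.piFinset_univ]
  exact (Finset.prod_univ_sum _ fun k j => M k (f k) j * M' k j (g k)).symm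

lemma pauliString_mul_conjTranspose {N : ℕ} (a : Fin N → Fin 4) :
    PauliString a * (PauliString a)ᴴ = 1 := by
  have hP : PauliString a = of fun f g => ∏ k, pauli (a k) (f k) (g k) := rfl
  have hPH : (PauliString a)ᴴ = of fun f g => ∏ k, (pauli (a k))ᴴ (f k) (g k) := by
    ext f g
    simp [PauliString, star_prod]
  rw [hPH, hP, of_prod_mul_of_prod]
  ext f g
  simp only [pauli_mul_conjTranspose, of_apply, one_apply,
    Finset.prod_boole, funext_iff, Finset.mem_univ, true_implies]

lemma trace_pauliString_mul_conjTranspose {N : ℕ} (a : Fin N → Fin 4) :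
    (PauliString a * (PauliString a)ᴴ).trace = 2 ^ N := by
  simp [pauliString_mul_conjTranspose]

lemma reindex_qubitEquiv_pauliString {NA NB : ℕ} (a : Fin (NA + NB) → Fin 4) :
    reindex (qubitEquiv NA NB) (qubitEquiv NA NB) (PauliString a) =
      PauliString (fun i => a (Fin.castAdd NB i)) ⊗ₖ PauliString (fun j => a (Fin.natAdd NA j)) := by
  ext ⟨fA, fB⟩ ⟨gA, gB⟩
  simp [PauliString, Fin.prod_univ_add, qubitEquiv, Equiv.sumArrowEquivProdArrow, Equiv.arrowCongr]

lemma trace_rhoAq_pauliString_mul_self {NA NB : ℕ} (a : Fin (NA + NB) → Fin 4) :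
    (rhoAq NA NB (PauliString a) * rhoAq NA NB (PauliString a)).trace = 1 := by
  rw [rhoAq, reindex_qubitEquiv_pauliString, trace_rhoA_kronecker_mul_self,
    trace_pauliString_mul_conjTranspose, trace_pauliString_mul_conjTranspose]
  simp

lemma rhoAq_smul {NA NB : ℕ} {c : ℂ} (hc : c * star c = 1)
    (O : Matrix (Fin (NA + NB) → Fin 2) (Fin (NA + NB) → Fin 2) ℂ) :
    rhoAq NA NB (c • O) = rhoAq NA NB O :=
  rhoA_smul hc _

theorem clifford_preserves_loe_pure_general (NA NB : ℕ)
    (C : Matrix (Fin (NA + NB) → Fin 2) (Fin (NA + NB) → Fin 2) ℂ)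
    (hCliff : ∀ a : Fin (NA + NB) → Fin 4, ∃ b : Fin (NA + NB) → Fin 4,
      ∃ c ∈ ({1, -1, Complex.I, -Complex.I} : Set ℂ),
        Cᴴ * PauliString a * C = c • PauliString b)
    (a₀ : Fin (NA + NB) → Fin 4) :
    (Matrix.trace (rhoAq NA NB (Cᴴ * PauliString a₀ * C) *
        rhoAq NA NB (Cᴴ * PauliString a₀ * C))).re = 1 := by
  obtain ⟨b, c, hc, hCb⟩ := hCliff a₀
  have hc_unit : c * star c = 1 := by
    simp only [Set.mem_insert_iff, Set.mem_singleton_iff] at hc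
    rcases hc with rfl | rfl | rfl | rfl <;> simp
  rw [hCb, rhoAq_smul hc_unit, trace_rhoAq_pauliString_mul_self, Complex.one_re]

/-- Clifford dynamics preserve zero local-operator entanglement
of Pauli operators. -/
theorem clifford_preserves_loe_pure (NA NB : ℕ)
    (C : Matrix (Fin (NA + NB) → Fin 2) (Fin (NA + NB) → Fin 2) ℂ)
    (hC : C ∈ Matrix.unitaryGroup (Fin (NA + NB) → Fin 2) ℂ)
    (hCliff : ∀ a : Fin (NA + NB) → Fin 4, ∃ b : Fin (NA + NB) → Fin 4,
      ∃ c ∈ ({1, -1, Complex.I, -Complex.I} : Set ℂ),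
        Cᴴ * PauliString a * C = c • PauliString b)
    (a₀ : Fin (NA + NB) → Fin 4) :
    (Matrix.trace (rhoAq NA NB (Cᴴ * PauliString a₀ * C) *
        rhoAq NA NB (Cᴴ * PauliString a₀ * C))).re = 1 :=
  clifford_preserves_loe_pure_general NA NB C hCliff a₀

end
end

section
/- (Appendix A, Proposition 5, constructive form: operator Schmidt rank of a Heisenberg operator is at most the square of that of the propagator.) Let ιA, ιB be finite types and suppose the matrix U on ιA × ιB admits a decomposition U = ∑_{i : Fin r} A_i ⊗ₖ B_i with A_i matrices on ιA and B_i matrices on ιB. Then for any matrices O_A on ιA and O_B on ιB there exist families Ã : Fin (r²) → Matrix ιA ιA ℂ and B̃ : Fin (r²) → Matrix ιB ιB ℂ such that Uᴴ * (O_A ⊗ₖ O_B) * U = ∑_{ℓ : Fin (r²)} Ã_ℓ ⊗ₖ B̃_ℓ. Consequently, if the Heisenberg operator Uᴴ (O_A ⊗ₖ O_B) U cannot be written as a sum of fewer than s Kronecker products, then U cannot be written as a sum of fewer than √s Kronecker products, i.e. E^{(0)}(U) ≥ (1/2)·E^{(0)}(Uᴴ(O_A⊗O_B)U). -/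
open Matrix Kronecker
open scoped Classical

noncomputable section

section KroneckerSums

variable {R ι κ l m m' n p p' l' q' : Type*} [CommSemiring R] [StarRing R]
  [Fintype ι] [Fintype κ] [Fintype m] [Fintype m'] [Fintype p] [Fintype p']

theorem conjTranspose_sum_kronecker_mul_kronecker_mul_sum_kronecker
    (A : ι → Matrix m l R) (B : ι → Matrix p n R) (X : Matrix m m' R) (Y : Matrix p p' R)
    (C : κ → Matrix m' l' R) (D : κ → Matrix p' q' R) :
    (∑ i, A i ⊗ₖ B i)ᴴ * (X ⊗ₖ Y) * ∑ j, C j ⊗ₖ D j =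
      ∑ ij : ι × κ, ((A ij.1)ᴴ * X * C ij.2) ⊗ₖ ((B ij.1)ᴴ * Y * D ij.2) := by
  simp only [conjTranspose_sum, conjTranspose_kronecker, Matrix.sum_mul, Matrix.mul_sum,
    ← mul_kronecker_mul, Fintype.sum_prod_type]
  exact Finset.sum_comm

end KroneckerSums

theorem heisenberg_schmidt_rank_le_sq_general {ιA ιB : Type*}
    [Fintype ιA] [Fintype ιB]
    (r : ℕ) (U : Matrix (ιA × ιB) (ιA × ιB) ℂ)
    (A : Fin r → Matrix ιA ιA ℂ) (B : Fin r → Matrix ιB ιB ℂ)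
    (hU : U = ∑ i : Fin r, A i ⊗ₖ B i)
    (OA : Matrix ιA ιA ℂ) (OB : Matrix ιB ιB ℂ) :
    ∃ Atil : Fin (r ^ 2) → Matrix ιA ιA ℂ,
      ∃ Btil : Fin (r ^ 2) → Matrix ιB ιB ℂ,
        Uᴴ * (OA ⊗ₖ OB) * U = ∑ l : Fin (r ^ 2), Atil l ⊗ₖ Btil l := by
  let e : Fin (r ^ 2) ≃ Fin r × Fin r := (finCongr (sq r)).trans finProdFinEquiv.symm
  refine ⟨fun l => (A (e l).1)ᴴ * OA * A (e l).2, fun l => (B (e l).1)ᴴ * OB * B (e l).2, ?_⟩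
  rw [hU, conjTranspose_sum_kronecker_mul_kronecker_mul_sum_kronecker]
  exact (e.sum_comp fun ij => ((A ij.1)ᴴ * OA * A ij.2) ⊗ₖ ((B ij.1)ᴴ * OB * B ij.2)).symm

/-- Appendix A, Proposition 5, constructive form: if `U` is a
sum of `r` Kronecker products then `Uᴴ (O_A ⊗ O_B) U` is a sum of `r²`
Kronecker products. -/
theorem heisenberg_schmidt_rank_le_sq {ιA ιB : Type*}
    [Fintype ιA] [Fintype ιB] [DecidableEq ιA] [DecidableEq ιB]
    (r : ℕ) (U : Matrix (ιA × ιB) (ιA × ιB) ℂ)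
    (A : Fin r → Matrix ιA ιA ℂ) (B : Fin r → Matrix ιB ιB ℂ)
    (hU : U = ∑ i : Fin r, A i ⊗ₖ B i)
    (OA : Matrix ιA ιA ℂ) (OB : Matrix ιB ιB ℂ) :
    ∃ Atil : Fin (r ^ 2) → Matrix ιA ιA ℂ,
      ∃ Btil : Fin (r ^ 2) → Matrix ιB ιB ℂ,
        Uᴴ * (OA ⊗ₖ OB) * U = ∑ l : Fin (r ^ 2), Atil l ⊗ₖ Btil l :=
  heisenberg_schmidt_rank_le_sq_general r U A B hU OA OB

end
end

section
/- (Lemma 1.) Let N ≥ 1, let O = P_{a₀} be a non-identity Pauli string on (Fin N → Fin 2), and let π : Equiv.Perm (Fin 4). Then: (i) tr(Λ⁺ * T_π) = D^(#(π) − 2·δ(π)); (ii) tr(O^{⊗4} * Λ⁺ * T_π) = D^(#(π) − 2·δ(π)); and (iii) tr(O^{⊗4} * Λ⁻ * T_π) = −δ(π) · D^(#(π) − 2), where the right-hand side of (iii) is 0 when δ(π) = 0 (note #(π) ≥ 2 whenever δ(π) = 1, so all exponents are natural numbers). -/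
open Matrix Kronecker
open scoped Classical

noncomputable section

/-!
Pauli strings and the replica trace both factor over qubits, so
`tr(P_a^{⊗4} T_π) = ∏ₖ tr(σ_{a k}^{⊗4} T_π)`. The one-qubit factor is `∏_{cycles c} tr(σ^{|c|})`,
which is `2^{#π}` for `σ₀` and `(1 - δ(π)) 2^{#π}` for `σ ≠ σ₀` (as `σ² = 1` and `tr σ = 0`).
Summing over all labels gives (i). Pauli strings multiply up to fourth roots of unity, so
`O^{⊗4} P_a^{⊗4} = P_{a₀ ⊕ a}^{⊗4}` and hence `O^{⊗4} Λ⁺ = Λ⁺`, which gives (ii); then (iii) is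
`tr(O^{⊗4} T_π)` minus (ii).
-/

section PiTensor

variable {ι κ R : Type*} [Fintype ι] [CommSemiring R]

def piTensor (M : ι → Matrix κ κ R) : Matrix (ι → κ) (ι → κ) R :=
  fun f g => ∏ i, M i (f i) (g i)

theorem piTensor_mul [DecidableEq ι] [Fintype κ] (M M' : ι → Matrix κ κ R) :
    piTensor M * piTensor M' = piTensor fun i => M i * M' i := by
  ext f g
  simp only [piTensor, mul_apply, Fintype.prod_sum, ← Finset.prod_mul_distrib]

theorem piTensor_smul (c : ι → R) (M : ι → Matrix κ κ R) :
    piTensor (fun i => c i • M i) = (∏ i, c i) • piTensor M := by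
  ext f g
  simp only [piTensor, Matrix.smul_apply, smul_eq_mul, Finset.prod_mul_distrib]

end PiTensor

theorem replica_eq_piTensor {ι : Type*} (n : ℕ) (A : Matrix ι ι ℂ) :
    replica n A = piTensor fun _ : Fin n => A := rfl

theorem pauliString_eq_piTensor {N : ℕ} (a : Fin N → Fin 4) :
    PauliString a = piTensor fun k => pauli (a k) := rfl

theorem replica_mul {ι : Type*} [Fintype ι] (n : ℕ) (A B : Matrix ι ι ℂ) :
    replica n A * replica n B = replica n (A * B) :=
  piTensor_mul _ _

theorem replica_smul {ι : Type*} (n : ℕ) (c : ℂ) (A : Matrix ι ι ℂ) :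
    replica n (c • A) = c ^ n • replica n A := by
  rw [replica_eq_piTensor, piTensor_smul (fun _ => c), Finset.prod_const, Finset.card_fin]
  rfl

def replicaTraceInt {ι : Type*} [Fintype ι] {n : ℕ} (π : Equiv.Perm (Fin n))
    (A : Matrix ι ι ℤ) : ℤ :=
  ∑ φ : Fin n → ι, ∏ r, A (φ r) (φ (π r))

section Tperm

variable {ι : Type*} [Fintype ι] [DecidableEq ι] {n : ℕ}

theorem trace_mul_tperm (M : Matrix (Fin n → ι) (Fin n → ι) ℂ) (π : Equiv.Perm (Fin n)) :
    trace (M * Tperm π) = ∑ f, M f (f ∘ π) := by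
  simp [trace, mul_apply, Tperm]

theorem trace_replica_piTensor_mul_tperm {σ : Type*} [Fintype σ] [DecidableEq σ]
    (M : σ → Matrix ι ι ℂ) (π : Equiv.Perm (Fin n)) :
    trace (replica n (piTensor M) * Tperm π) = ∏ s, trace (replica n (M s) * Tperm π) := by
  simp only [trace_mul_tperm, replica, piTensor, Function.comp_apply, Fintype.prod_sum]
  rw [← (Equiv.piComm fun (_ : Fin n) (_ : σ) => ι).sum_comp]
  exact Fintype.sum_congr _ _ fun f => Finset.prod_comm

theorem trace_replica_map_intCast_mul_tperm (A : Matrix ι ι ℤ) (π : Equiv.Perm (Fin n)) :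
    trace (replica n (A.map (Int.cast : ℤ → ℂ)) * Tperm π) = (replicaTraceInt π A : ℂ) := by
  simp [trace_mul_tperm, replica, replicaTraceInt]

end Tperm

/-- Integer matrices equal to the Pauli matrices up to a phase `1` or `i`: the third one is
`XZ`, as `Y = i XZ`. -/
def pauliInt : Fin 4 → Matrix (Fin 2) (Fin 2) ℤ :=
  ![1, !![0, 1; 1, 0], !![0, -1; 1, 0], !![1, 0; 0, -1]]

/- The values of `∏_{cycles c} tr(σ^{|c|})`, checked over all of `S₄` by evaluation in the
kernel. -/

theorem replicaTraceInt_pauliInt : ∀ (π : Equiv.Perm (Fin 4)) (α : Fin 4),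
    replicaTraceInt π (pauliInt α) = if α ≠ 0 ∧ deltaOdd π = 1 then 0 else 2 ^ numCycles π := by
  decide +kernel

theorem sum_replicaTraceInt_pauliInt : ∀ π : Equiv.Perm (Fin 4),
    ∑ α, replicaTraceInt π (pauliInt α) = 4 * 2 ^ (numCycles π - 2 * deltaOdd π) := by
  decide +kernel

theorem trace_replica_pauli_mul_tperm (π : Equiv.Perm (Fin 4)) (α : Fin 4) :
    trace (replica 4 (pauli α) * Tperm π) = (replicaTraceInt π (pauliInt α) : ℂ) := by
  obtain ⟨c, hc, hα⟩ :
      ∃ c : ℂ, c ^ 4 = 1 ∧ pauli α = c • (pauliInt α).map (Int.cast : ℤ → ℂ) := by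
    refine ⟨![1, 1, Complex.I, 1] α, ?_, ?_⟩
    · fin_cases α <;> simp [Complex.I_pow_four]
    · fin_cases α <;> ext i j <;> fin_cases i <;> fin_cases j <;> simp [pauli, pauliInt]
  rw [hα, replica_smul, smul_mul, trace_smul, hc, one_smul, trace_replica_map_intCast_mul_tperm]

def pauliMulPhase : Fin 4 → Fin 4 → ℂ :=
  ![![1, 1, 1, 1], ![1, 1, Complex.I, -Complex.I], ![1, -Complex.I, 1, Complex.I],
    ![1, Complex.I, -Complex.I, 1]]

theorem pauliMulPhase_pow_four (β α : Fin 4) : pauliMulPhase β α ^ 4 = 1 := by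
  fin_cases β <;> fin_cases α <;> norm_num [pauliMulPhase, Complex.I_pow_four]

theorem pauli_mul_pauli (β α : Fin 4) :
    pauli β * pauli α = pauliMulPhase β α • pauli (β ^^^ α) := by
  fin_cases β <;> fin_cases α <;> ext i j <;> fin_cases i <;> fin_cases j <;>
    simp [pauli, pauliMulPhase, mul_apply, Fin.sum_univ_two]

theorem pauliString_mul_pauliString {N : ℕ} (a b : Fin N → Fin 4) :
    PauliString a * PauliString b =
      (∏ k, pauliMulPhase (a k) (b k)) • PauliString fun k => a k ^^^ b k := by
  simp only [pauliString_eq_piTensor, piTensor_mul, pauli_mul_pauli, piTensor_smul]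

theorem replica_four_pauliString_mul {N : ℕ} (a b : Fin N → Fin 4) :
    replica 4 (PauliString a) * replica 4 (PauliString b) =
      replica 4 (PauliString fun k => a k ^^^ b k) := by
  rw [replica_mul, pauliString_mul_pauliString, replica_smul, ← Finset.prod_pow]
  simp only [pauliMulPhase_pow_four, Finset.prod_const_one, one_smul]

theorem replica_pauliString_mul_lambdaPlus {N : ℕ} (a : Fin N → Fin 4) :
    replica 4 (PauliString a) * LambdaPlus N = LambdaPlus N := by
  have hxor : ∀ x y : Fin 4, x ^^^ (x ^^^ y) = y := by decide
  have hinv : Function.Involutive fun b : Fin N → Fin 4 => fun k => a k ^^^ b k :=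
    fun b => funext fun k => hxor _ _
  simp only [LambdaPlus, Matrix.mul_smul, Matrix.mul_sum, replica_four_pauliString_mul]
  congr 1
  exact Fintype.sum_equiv hinv.toPerm _ _ fun _ => rfl

theorem trace_lambdaPlus_mul_tperm (N : ℕ) (π : Equiv.Perm (Fin 4)) :
    trace (LambdaPlus N * Tperm π) = (2 ^ N : ℂ) ^ (numCycles π - 2 * deltaOdd π) := by
  simp only [LambdaPlus, smul_mul, Matrix.sum_mul, trace_smul, trace_sum,
    pauliString_eq_piTensor, trace_replica_piTensor_mul_tperm, trace_replica_pauli_mul_tperm]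
  rw [← Fintype.sum_pow fun α => (replicaTraceInt π (pauliInt α) : ℂ), ← Int.cast_sum,
    sum_replicaTraceInt_pauliInt]
  push_cast
  rw [mul_pow, ← pow_mul, pow_mul', smul_eq_mul, ← mul_assoc,
    one_div_mul_cancel (pow_ne_zero _ (by norm_num)), one_mul]

theorem trace_replica_pauliString_mul_tperm {N : ℕ} {a : Fin N → Fin 4} (ha : ∃ k, a k ≠ 0)
    (π : Equiv.Perm (Fin 4)) :
    trace (replica 4 (PauliString a) * Tperm π) =
      if deltaOdd π = 1 then 0 else (2 ^ N : ℂ) ^ numCycles π := by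
  simp only [pauliString_eq_piTensor, trace_replica_piTensor_mul_tperm,
    trace_replica_pauli_mul_tperm, replicaTraceInt_pauliInt]
  split_ifs with hδ
  · obtain ⟨k, hk⟩ := ha
    exact Finset.prod_eq_zero (Finset.mem_univ k) (by simp [hk, hδ])
  · simp only [hδ, and_false, if_false, Finset.prod_const, Finset.card_univ, Fintype.card_fin]
    push_cast
    exact pow_right_comm _ _ _

theorem lemma_one_general (N : ℕ) (a₀ : Fin N → Fin 4)
    (h₀ : ∃ k, a₀ k ≠ 0) (π : Equiv.Perm (Fin 4)) :
    Matrix.trace (LambdaPlus N * Tperm π) =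
        (2 ^ N : ℂ) ^ (numCycles π - 2 * deltaOdd π) ∧
    Matrix.trace (replica 4 (PauliString a₀) * LambdaPlus N * Tperm π) =
        (2 ^ N : ℂ) ^ (numCycles π - 2 * deltaOdd π) ∧
    Matrix.trace (replica 4 (PauliString a₀) * (1 - LambdaPlus N) * Tperm π) =
        -(deltaOdd π : ℂ) * (2 ^ N : ℂ) ^ (numCycles π - 2) := by
  refine ⟨trace_lambdaPlus_mul_tperm N π, ?_, ?_⟩
  · rw [replica_pauliString_mul_lambdaPlus, trace_lambdaPlus_mul_tperm]
  · rw [Matrix.mul_sub, Matrix.mul_one, replica_pauliString_mul_lambdaPlus, Matrix.sub_mul,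
      trace_sub, trace_replica_pauliString_mul_tperm h₀, trace_lambdaPlus_mul_tperm]
    obtain hδ | hδ : deltaOdd π = 0 ∨ deltaOdd π = 1 := by
      unfold deltaOdd
      split_ifs <;> simp
    all_goals simp [hδ]

/-- Lemma 1: traces of four-fold replicated non-identity Pauli
strings against `Λ±` and replica permutation operators. -/
theorem lemma_one (N : ℕ) (hN : 1 ≤ N) (a₀ : Fin N → Fin 4)
    (h₀ : ∃ k, a₀ k ≠ 0) (π : Equiv.Perm (Fin 4)) :
    Matrix.trace (LambdaPlus N * Tperm π) =
        (2 ^ N : ℂ) ^ (numCycles π - 2 * deltaOdd π) ∧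
    Matrix.trace (replica 4 (PauliString a₀) * LambdaPlus N * Tperm π) =
        (2 ^ N : ℂ) ^ (numCycles π - 2 * deltaOdd π) ∧
    Matrix.trace (replica 4 (PauliString a₀) * (1 - LambdaPlus N) * Tperm π) =
        -(deltaOdd π : ℂ) * (2 ^ N : ℂ) ^ (numCycles π - 2) :=
  lemma_one_general N a₀ h₀ π

end
end

section
/- (Replica-trick purity identity, Eq. (purityLOE).) Let ιA, ιB be finite types and let O be a Hermitian matrix on ιA × ιB (Oᴴ = O), with d := card ιA * card ιB. Then the purity of the reduced Choi state equals a four-replica trace against the permutation operator T': tr(ρ_A(O)²) = (1/d²) · tr(O^{⊗4} * T'). -/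
open Matrix Kronecker
open scoped Classical

noncomputable section

/-!
Both sides are the same eightfold sum of products of four entries of `O`. Expanding
`tr ρ_A(O)²` gives terms `O · conj O · O · conj O`, and `Oᴴ = O` turns each conjugated entry
into a transposed entry of `O`. On the other side, `T'` gives replica `a` the column index whose
`ιA`-part is the row `ιA`-index of replica `permA a` and whose `ιB`-part is the row `ιB`-index of
replica `permB a`; after relabelling the replicas this is exactly the index pattern of the first sum.
-/

open Finset

theorem Matrix.trace_mul_eq_sum_of_apply_eq_ite {n R : Type*} [Fintype n] [DecidableEq n]
    [NonAssocSemiring R] (M T : Matrix n n R) (σ : n → n)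
    (hT : ∀ g f, T g f = if g = σ f then 1 else 0) :
    trace (M * T) = ∑ f, M f (σ f) := by
  simp [trace, mul_apply, hT]

theorem trace_rhoA_mul_rhoA {ιA ιB : Type*} [Fintype ιA] [Fintype ιB]
    (O : Matrix (ιA × ιB) (ιA × ιB) ℂ) :
    trace (rhoA O * rhoA O) =
      1 / (Fintype.card ιA * Fintype.card ιB : ℂ) ^ 2 *
        ∑ p : ιA × ιA, ∑ q : ιA × ιA, ∑ b : ιB × ιB, ∑ c : ιB × ιB,
          O (p.1, b.1) (p.2, b.2) * star (O (q.1, b.1) (q.2, b.2)) *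
            (O (q.1, c.1) (q.2, c.2) * star (O (p.1, c.1) (p.2, c.2))) := by
  have hk (c x y : ℂ) : 1 / c * x * (1 / c * y) = 1 / c ^ 2 * (x * y) := by ring
  simp only [trace, diag_apply, mul_apply, rhoA, hk, ← mul_sum, sum_mul_sum,
    ← Fintype.sum_prod_type']

section

variable {ιA ιB : Type*} [DecidableEq ιA] [DecidableEq ιB]

theorem Tprime_apply (f g : Fin 4 → ιA × ιB) :
    (Tprime f g : ℂ) = if f = (fun a => ((g (permA a)).1, (g (permB a)).2)) then 1 else 0 := by
  simp only [Tprime, funext_iff, Prod.ext_iff]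

theorem trace_replica_four_mul_Tprime [Fintype ιA] [Fintype ιB]
    (O : Matrix (ιA × ιB) (ιA × ιB) ℂ) :
    trace (replica 4 O * Tprime) =
      ∑ f : Fin 4 → ιA × ιB,
        O (f 0) ((f 1).1, (f 3).2) * O (f 1) ((f 0).1, (f 2).2) * O (f 2) ((f 3).1, (f 1).2) *
          O (f 3) ((f 2).1, (f 0).2) := by
  rw [trace_mul_eq_sum_of_apply_eq_ite _ _ _ Tprime_apply]
  simp [replica, Fin.prod_univ_four, permA, permB, Equiv.swap_apply_def]

end

/-- Replica `a` is the row index of one of the four factors in `trace_rhoA_mul_rhoA`, the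
conjugated factors being transposed by `Oᴴ = O`. -/
@[simps apply]
def replicaIndexEquiv (ιA ιB : Type*) :
    (ιA × ιA) × (ιA × ιA) × (ιB × ιB) × (ιB × ιB) ≃ (Fin 4 → ιA × ιB) where
  toFun x := ![(x.1.1, x.2.2.1.1), (x.1.2, x.2.2.2.2), (x.2.1.1, x.2.2.2.1), (x.2.1.2, x.2.2.1.2)]
  invFun f := (((f 0).1, (f 1).1), ((f 2).1, (f 3).1), ((f 0).2, (f 3).2), ((f 2).2, (f 1).2))
  left_inv _ := rfl
  right_inv f := by funext a; fin_cases a <;> rfl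

/-- replica-trick purity identity: the purity of the reduced
Choi state equals the four-replica trace against `T'`. -/
theorem purity_replica_trick {ιA ιB : Type*}
    [Fintype ιA] [Fintype ιB] [DecidableEq ιA] [DecidableEq ιB]
    (O : Matrix (ιA × ιB) (ιA × ιB) ℂ) (hO : Oᴴ = O) :
    Matrix.trace (rhoA O * rhoA O) =
      (1 / (Fintype.card ιA * Fintype.card ιB : ℂ) ^ 2) *
        Matrix.trace (replica 4 O * Tprime) := by
  have hstar (x y : ιA × ιB) : star (O x y) = O y x := by rw [← conjTranspose_apply, hO]
  rw [trace_rhoA_mul_rhoA, trace_replica_four_mul_Tprime, ← (replicaIndexEquiv ιA ιB).sum_comp]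
  congr 1
  simp only [← Fintype.sum_prod_type']
  refine Fintype.sum_congr _ _ fun x => ?_
  simp only [replicaIndexEquiv_apply, Fin.isValue, cons_val_zero, cons_val_one, Matrix.cons_val, hstar]
  ring

end
end

section
/- (Eq. (TT).) Let ιA, ιB be finite types and σ : Equiv.Perm (Fin 4). Then tr(T_σ * T') = (card ιA)^{#(σ · π_A)} · (card ιB)^{#(σ · π_B)}, where π_A = (0 1)(2 3) and π_B = (0 3)(1 2); since the number of cycles is invariant under conjugation and inversion, the order of composition is immaterial. -/
open Matrix Kronecker
open scoped Classical

noncomputable section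

/-!
Summing out `T_σ` leaves `∑ g, T' g (g ∘ σ)`, and the condition `T' g (g ∘ σ) = 1` splits into
independent conditions on the two components of `g`: its `ιA`-part must be invariant under
`σ * permA` and its `ιB`-part under `σ * permB`. A function invariant under a permutation is
constant on its cycles, so there are `(card ι) ^ #(π)` of them. The cycles are the `SameCycle`
classes, which correspond to the nontrivial cycle factors together with the fixed points.
-/

namespace Equiv.Perm

variable {α : Type*} [Fintype α] [DecidableEq α] (π : Perm α)

def cycleOrFixedPoint (a : α) : {c // c ∈ π.cycleFactorsFinset} ⊕ {x // π x = x} :=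
  if h : π a = a then .inr ⟨a, h⟩
  else .inl ⟨π.cycleOf a, cycleOf_mem_cycleFactorsFinset_iff.mpr (mem_support.mpr h)⟩

theorem sameCycle_iff_cycleOrFixedPoint_eq (a b : α) :
    π.SameCycle a b ↔ π.cycleOrFixedPoint a = π.cycleOrFixedPoint b := by
  by_cases ha : π a = a <;> by_cases hb : π b = b <;>
    simp only [cycleOrFixedPoint, ha, hb, dite_true, dite_false, reduceCtorEq, iff_false,
      Sum.inl.injEq, Sum.inr.injEq, Subtype.mk.injEq]
  · exact ⟨fun h => h.eq_of_left ha, fun h => h ▸ SameCycle.refl _ _⟩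
  · exact fun h => hb (h.eq_of_left ha ▸ ha)
  · exact fun h => ha ((h.eq_of_right hb).symm ▸ hb)
  · exact sameCycle_iff_cycleOf_eq_of_mem_support (mem_support.mpr ha) (mem_support.mpr hb)

theorem cycleOrFixedPoint_surjective : Function.Surjective π.cycleOrFixedPoint := by
  rintro (⟨c, hc⟩ | ⟨x, hx⟩)
  · obtain ⟨a, ha⟩ := (mem_cycleFactorsFinset_iff.mp hc).1.nonempty_support
    have hπa : π a ≠ a := mem_support.mp (mem_cycleFactorsFinset_support_le hc ha)
    exact ⟨a, by simp [cycleOrFixedPoint, hπa, cycle_is_cycleOf ha hc]⟩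
  · exact ⟨x, by simp [cycleOrFixedPoint, hx]⟩

theorem card_invariant_fun (ι : Type*) [Fintype ι] :
    Fintype.card {h : α → ι // ∀ a, h a = h (π a)} =
      Fintype.card ι ^ (Multiset.card π.cycleType + Fintype.card {x // π x = x}) := by
  have hker : SameCycle.setoid π = Setoid.ker π.cycleOrFixedPoint :=
    Setoid.ext π.sameCycle_iff_cycleOrFixedPoint_eq
  have hinv (h : α → ι) :
      (∀ a, h a = h (π a)) ↔ Setoid.ker π.cycleOrFixedPoint ≤ Setoid.ker h := by
    rw [← hker]
    refine ⟨fun hh a b hab => ?_, fun hh a => hh (sameCycle_apply_right.mpr (SameCycle.refl _ a))⟩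
    obtain ⟨n, -, rfl⟩ := SameCycle.exists_pow_eq' hab
    have hsemi : Function.Semiconj h π id := fun a => (hh a).symm
    simpa [coe_pow] using (hsemi.iterate_right n a).symm
  rw [Fintype.card_congr ((Equiv.subtypeEquivRight hinv).trans (Setoid.liftEquiv _)),
    Fintype.card_fun,
    Fintype.card_congr (Setoid.quotientKerEquivOfSurjective _ π.cycleOrFixedPoint_surjective),
    Fintype.card_sum, Fintype.card_coe, cycleType, Multiset.card_map]
  rfl

end Equiv.Perm

theorem sum_ite_invariant_eq_pow_numCycles {n : ℕ} (π : Equiv.Perm (Fin n)) (ι : Type*)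
    [Fintype ι] [DecidableEq ι] :
    ∑ h : Fin n → ι, (if ∀ a, h a = h (π a) then (1 : ℂ) else 0) =
      (Fintype.card ι : ℂ) ^ numCycles π := by
  rw [Finset.sum_boole, ← Nat.cast_pow, Nat.cast_inj, ← Fintype.card_subtype, numCycles,
    ← Fintype.card_subtype]
  -- the two cardinalities differ only in the `Decidable` instance of the predicate
  convert π.card_invariant_fun ι

theorem trace_Tperm_mul {ι : Type*} [Fintype ι] [DecidableEq ι] {n : ℕ}
    (π : Equiv.Perm (Fin n)) (M : Matrix (Fin n → ι) (Fin n → ι) ℂ) :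
    (Tperm π * M).trace = ∑ g, M g (g ∘ π) := by
  simp only [trace, diag, mul_apply, Tperm, ite_mul, one_mul, zero_mul]
  rw [Finset.sum_comm]
  simp

theorem Tprime_apply_comp {ιA ιB : Type*} [DecidableEq ιA] [DecidableEq ιB]
    (σ : Equiv.Perm (Fin 4)) (g : Fin 4 → ιA × ιB) :
    (Tprime g (g ∘ σ) : ℂ) =
      (if ∀ a, (g a).1 = (g ((σ * permA) a)).1 then 1 else 0) *
        (if ∀ a, (g a).2 = (g ((σ * permB) a)).2 then 1 else 0) := by
  rw [Tprime, ite_zero_mul_ite_zero, one_mul]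
  exact if_congr forall_and rfl rfl

theorem Fintype.sum_fun_prod_mul {α β γ R : Type*} [Fintype α] [DecidableEq α] [Fintype β]
    [Fintype γ] [CommSemiring R] (f : (α → β) → R) (g : (α → γ) → R) :
    ∑ h : α → β × γ, f (Prod.fst ∘ h) * g (Prod.snd ∘ h) = (∑ x, f x) * ∑ y, g y := by
  rw [Finset.sum_mul_sum, ← Fintype.sum_prod_type',
    ← (Equiv.arrowProdEquivProdArrow α (fun _ => β) (fun _ => γ)).sum_comp]
  rfl

/-- Eq. (TT): `tr(T_σ T')` factorizes into the cycle counts of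
`σ·π_A` and `σ·π_B`. -/
theorem trace_Tperm_Tprime {ιA ιB : Type*}
    [Fintype ιA] [Fintype ιB] [DecidableEq ιA] [DecidableEq ιB]
    (σ : Equiv.Perm (Fin 4)) :
    Matrix.trace ((Tperm σ : Matrix (Fin 4 → ιA × ιB) (Fin 4 → ιA × ιB) ℂ) *
        Tprime) =
      (Fintype.card ιA : ℂ) ^ numCycles (σ * permA) *
        (Fintype.card ιB : ℂ) ^ numCycles (σ * permB) := by
  rw [trace_Tperm_mul]
  simp only [Tprime_apply_comp]
  rw [← sum_ite_invariant_eq_pow_numCycles, ← sum_ite_invariant_eq_pow_numCycles]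
  exact Fintype.sum_fun_prod_mul
    (fun x : Fin 4 → ιA => if ∀ a, x a = x ((σ * permA) a) then (1 : ℂ) else 0)
    (fun y : Fin 4 → ιB => if ∀ a, y a = y ((σ * permB) a) then 1 else 0)
end
end

section
/- (Eq. (lamTT).) Let N = N_A + N_B with D = 2^N, D_A = 2^{N_A}, D_B = 2^{N_B}, identify (Fin N → Fin 2) with (Fin N_A → Fin 2) × (Fin N_B → Fin 2), and let σ : Equiv.Perm (Fin 4). Then tr(Λ⁺ * T_σ * T') = D_A^(#(σ·π_A) − 2·δ(σ·π_A)) · D_B^(#(σ·π_B) − 2·δ(σ·π_B)), where π_A = (0 1)(2 3) and π_B = (0 3)(1 2). -/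
open Matrix Kronecker
open scoped Classical

noncomputable section

/-! After the split into subsystems A and B, every Pauli string becomes a Kronecker product
`P_a ⊗ P_b`, and contracting with `T_σ T'` closes the A-indices along `π_A σ` and the B-indices
along `π_B σ`. So the trace factors into an A-part and a B-part, and each part is a tensor power
over qubits of the single-qubit quantity
`S(t) = ∑_μ tr(σ_μ^{⊗4} T_t) = ∑_μ ∏_{cycles c of t} tr(σ_μ^{|c|})`.
The identity contributes `2^{#(t)}`; each of `X, Y, Z` contributes `2^{#(t)}` if all cycles of `t`
are even and `0` otherwise. Hence `S(t) = 4 · 2^{#(t) - 2δ(t)}`, which is checked on the 24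
elements of `S₄`. Finally `S` is a class function, so `S(π_A σ) = S(σ π_A)`, and the
normalisation `1/D²` cancels the factors `4^{N_A} 4^{N_B}`.
-/

open Equiv

section ReplicaTrace

variable {α ι R : Type*} [Fintype α] [DecidableEq α] [Fintype ι] [CommSemiring R]

/-- `replicaTrace M t = tr (M^{⊗α} T_t)`. -/
def replicaTrace (M : Matrix ι ι R) (t : Perm α) : R :=
  ∑ h : α → ι, ∏ r, M (h r) (h (t r))

theorem replicaTrace_conj (M : Matrix ι ι R) (τ t : Perm α) :
    replicaTrace M (τ * t * τ⁻¹) = replicaTrace M t := by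
  refine Fintype.sum_equiv (arrowCongr τ.symm (Equiv.refl ι)) _ _ fun h => ?_
  rw [← Equiv.prod_comp τ]
  simp [arrowCongr_apply]

theorem replicaTrace_mul_comm (M : Matrix ι ι R) (τ t : Perm α) :
    replicaTrace M (τ * t) = replicaTrace M (t * τ) := by
  simpa [mul_assoc] using replicaTrace_conj M τ (t * τ)

theorem replicaTrace_map {S : Type*} [CommSemiring S] (f : R →+* S) (M : Matrix ι ι R)
    (t : Perm α) : replicaTrace (M.map f) t = f (replicaTrace M t) := by
  simp [replicaTrace, map_sum, map_prod]

theorem replicaTrace_pi {κ : Type*} [Fintype κ] [DecidableEq κ] (M : κ → Matrix ι ι R)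
    (t : Perm α) :
    replicaTrace (fun f g : κ → ι => ∏ k, M k (f k) (g k)) t = ∏ k, replicaTrace (M k) t := by
  unfold replicaTrace
  rw [Fintype.prod_sum]
  refine Fintype.sum_equiv (piComm fun _ _ => ι) _ _ fun h => ?_
  exact Finset.prod_comm

end ReplicaTrace

theorem sum_replicaTrace_pauliString {α : Type*} [Fintype α] [DecidableEq α] (m : ℕ)
    (t : Perm α) :
    ∑ a : Fin m → Fin 4, replicaTrace (PauliString a) t = (∑ μ, replicaTrace (pauli μ) t) ^ m := by
  rw [Fintype.sum_pow]
  exact Fintype.sum_congr _ _ fun a => replicaTrace_pi (fun k => pauli (a k)) t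

/-- The Pauli matrices over `ℤ[i]`, where the single-qubit identity is decidable. -/
def pauliGauss : Fin 4 → Matrix (Fin 2) (Fin 2) GaussianInt :=
  ![1, !![0, 1; 1, 0], !![0, -⟨0, 1⟩; ⟨0, 1⟩, 0], !![1, 0; 0, -1]]

theorem pauli_eq_map (μ : Fin 4) : pauli μ = (pauliGauss μ).map GaussianInt.toComplex := by
  ext i j
  fin_cases μ <;> fin_cases i <;> fin_cases j <;>
    simp [pauli, pauliGauss, GaussianInt.toComplex_def']

theorem sum_replicaTrace_pauliGauss :
    ∀ π : Perm (Fin 4),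
      ∑ μ, replicaTrace (pauliGauss μ) π = 4 * 2 ^ (numCycles π - 2 * deltaOdd π) := by
  decide +kernel

theorem sum_replicaTrace_pauli (π : Perm (Fin 4)) :
    ∑ μ, replicaTrace (pauli μ) π = 4 * 2 ^ (numCycles π - 2 * deltaOdd π) := by
  simp_rw [pauli_eq_map, replicaTrace_map, ← map_sum, sum_replicaTrace_pauliGauss π]
  rw [map_mul, map_pow, map_ofNat, map_ofNat]

theorem trace_mul_Tperm_mul_Tprime {ιA ιB : Type*} [Fintype ιA] [Fintype ιB]
    [DecidableEq ιA] [DecidableEq ιB] (M : Matrix (Fin 4 → ιA × ιB) (Fin 4 → ιA × ιB) ℂ)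
    (σ : Perm (Fin 4)) :
    trace (M * Tperm σ * Tprime) =
      ∑ f : Fin 4 → ιA × ιB, M f fun r => ((f (permA (σ r))).1, (f (permB (σ r))).2) := by
  have hT : ∀ h f : Fin 4 → ιA × ιB, (Tprime h f : ℂ) =
      if h = fun r => ((f (permA r)).1, (f (permB r)).2) then 1 else 0 := by
    intro h f
    simp only [Tprime, funext_iff, Prod.ext_iff]
  simp only [trace, Matrix.diag, mul_apply, Tperm, hT, mul_ite, mul_one, mul_zero,
    Finset.sum_ite_eq', Finset.mem_univ, if_true]
  rfl

theorem trace_replica_kronecker_mul_Tperm_mul_Tprime {ιA ιB : Type*} [Fintype ιA] [Fintype ιB]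
    [DecidableEq ιA] [DecidableEq ιB] (A : Matrix ιA ιA ℂ) (B : Matrix ιB ιB ℂ)
    (σ : Perm (Fin 4)) :
    trace (replica 4 (A ⊗ₖ B) * Tperm σ * Tprime) =
      replicaTrace A (permA * σ) * replicaTrace B (permB * σ) := by
  rw [trace_mul_Tperm_mul_Tprime, replicaTrace, replicaTrace, Finset.sum_mul_sum,
    ← Fintype.sum_prod_type']
  refine Fintype.sum_equiv (arrowProdEquivProdArrow _ _ _) _ _ fun f => ?_
  simp [replica, Finset.prod_mul_distrib]

theorem qubitEquiv_symm_apply (NA NB : ℕ) (p : (Fin NA → Fin 2) × (Fin NB → Fin 2)) :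
    (qubitEquiv NA NB).symm p = Fin.append p.1 p.2 := by
  obtain ⟨u, v⟩ := p
  funext k
  refine Fin.addCases (fun i => ?_) (fun i => ?_) k <;> simp [qubitEquiv]

theorem pauliString_append {NA NB : ℕ} (aA : Fin NA → Fin 4) (aB : Fin NB → Fin 4)
    (uA vA : Fin NA → Fin 2) (uB vB : Fin NB → Fin 2) :
    PauliString (Fin.append aA aB) (Fin.append uA uB) (Fin.append vA vB) =
      PauliString aA uA vA * PauliString aB uB vB := by
  simp [PauliString, Fin.prod_univ_add]

theorem reindex_LambdaPlus (NA NB : ℕ) :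
    reindex (arrowCongr (Equiv.refl (Fin 4)) (qubitEquiv NA NB))
        (arrowCongr (Equiv.refl (Fin 4)) (qubitEquiv NA NB)) (LambdaPlus (NA + NB)) =
      (1 / (4 ^ (NA + NB) : ℂ)) • ∑ aA : Fin NA → Fin 4, ∑ aB : Fin NB → Fin 4,
        replica 4 (PauliString aA ⊗ₖ PauliString aB) := by
  ext f g
  simp only [LambdaPlus, reindex_apply, submatrix_apply, Matrix.smul_apply, Matrix.sum_apply,
    replica]
  rw [← (Fin.appendEquiv NA NB).sum_comp, ← Fintype.sum_prod_type']
  congr 1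
  refine Finset.sum_congr rfl fun a _ => Finset.prod_congr rfl fun r _ => ?_
  change PauliString (Fin.append a.1 a.2) ((qubitEquiv NA NB).symm (f r))
    ((qubitEquiv NA NB).symm (g r)) = _
  rw [qubitEquiv_symm_apply, qubitEquiv_symm_apply, pauliString_append, kronecker_apply]

/-- Eq. (lamTT): `tr(Λ⁺ T_σ T')` factorizes with the
even-cycle corrections on each factor. -/
theorem trace_LambdaPlus_Tperm_Tprime (NA NB : ℕ) (σ : Equiv.Perm (Fin 4)) :
    Matrix.trace
        (Matrix.reindex
            (Equiv.arrowCongr (Equiv.refl (Fin 4)) (qubitEquiv NA NB))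
            (Equiv.arrowCongr (Equiv.refl (Fin 4)) (qubitEquiv NA NB))
            (LambdaPlus (NA + NB)) *
          Tperm σ * Tprime) =
      (2 ^ NA : ℂ) ^ (numCycles (σ * permA) - 2 * deltaOdd (σ * permA)) *
        (2 ^ NB : ℂ) ^ (numCycles (σ * permB) - 2 * deltaOdd (σ * permB)) := by
  simp only [reindex_LambdaPlus, Matrix.smul_mul, Matrix.sum_mul, trace_smul, trace_sum,
    trace_replica_kronecker_mul_Tperm_mul_Tprime]
  rw [← Finset.sum_mul_sum, sum_replicaTrace_pauliString, sum_replicaTrace_pauliString]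
  simp_rw [replicaTrace_mul_comm _ permA σ, replicaTrace_mul_comm _ permB σ,
    sum_replicaTrace_pauli]
  rw [smul_eq_mul, one_div, inv_mul_eq_iff_eq_mul₀ (by norm_num)]
  ring

end
end
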